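/- arXiv:1806.08713 — 3 statements merged into one kernel-verified Lean document; each statement's English description precedes it below -/
import Mathlib

section
/- In the uniform swap Schelling game with tolerance parameter τ ≤ 1/2, the number of colored pairs Φ is an ordinal potential function: for every window size w ≥ 1, every finite connected graph G, every bijective placement p and every improving swap of two agents producing the placement p', one has Φ(p') < Φ(p). Consequently the u-SSG is a potential game. -/
open SimpleGraph Finset

namespace Schelling

variable {V I : Type*}

/-- The `w`-neighborhood of a node `u`: all nodes `v ≠ u` with `d_G(u,v) ≤ w`. -/
def nbhd (G : SimpleGraph V) (w : ℕ) (u : V) : Set V :=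
  {v | v ≠ u ∧ G.dist u v ≤ w}

/-- `|N⁺(p(x))|`: number of nodes in the `w`-neighborhood of `p x` occupied by
agents of the same type as `x`. -/
noncomputable def sCount (G : SimpleGraph V) (w : ℕ) (tp : I → Bool) (p : I → V) (x : I) : ℕ :=
  {v | v ∈ nbhd G w (p x) ∧ ∃ y, p y = v ∧ tp y = tp x}.ncard

/-- `|N⁻(p(x))|`: number of nodes in the `w`-neighborhood of `p x` occupied by
agents of the other type. -/
noncomputable def dCount (G : SimpleGraph V) (w : ℕ) (tp : I → Bool) (p : I → V) (x : I) : ℕ :=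
  {v | v ∈ nbhd G w (p x) ∧ ∃ y, p y = v ∧ tp y ≠ tp x}.ncard

/-- An agent is isolated if no node of its neighborhood is occupied. -/
def isolated (G : SimpleGraph V) (w : ℕ) (tp : I → Bool) (p : I → V) (x : I) : Prop :=
  sCount G w tp p x + dCount G w tp p x = 0

/-- The (scalar) cost of agent `x`: `τ` if isolated, otherwise
`max 0 (τ - |N⁺|/(|N⁺| + |N⁻|))`. -/
noncomputable def ucost (G : SimpleGraph V) (w : ℕ) (τ : ℝ) (tp : I → Bool) (p : I → V)
    (x : I) : ℝ :=
  if sCount G w tp p x + dCount G w tp p x = 0 then τ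
  else max 0 (τ - (sCount G w tp p x : ℝ) / ((sCount G w tp p x : ℝ) + (dCount G w tp p x : ℝ)))

/-- An agent is happy if it is not isolated and its local happiness ratio is at least `τ`. -/
def happy (G : SimpleGraph V) (w : ℕ) (τ : ℝ) (tp : I → Bool) (p : I → V) (x : I) : Prop :=
  sCount G w tp p x + dCount G w tp p x ≠ 0 ∧
    τ ≤ (sCount G w tp p x : ℝ) / ((sCount G w tp p x : ℝ) + (dCount G w tp p x : ℝ))

/-- The vector cost of agent `x`: scalar cost together with `d_G(fav_x, p x) + 1`,
to be compared lexicographically. -/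
noncomputable def vcost (G : SimpleGraph V) (w : ℕ) (τ : ℝ) (tp : I → Bool) (fav : I → V)
    (p : I → V) (x : I) : ℝ × ℕ :=
  (ucost G w τ tp p x, G.dist (fav x) (p x) + 1)

/-- The number of colored pairs `Φ(p) = (1/2) · Σ_x |N⁻(p(x))|`. -/
noncomputable def Phi [Fintype I] (G : SimpleGraph V) (w : ℕ) (tp : I → Bool) (p : I → V) : ℝ :=
  (1 / 2) * ∑ x : I, (dCount G w tp p x : ℝ)

/-- The pair potential `(Φ(p), Σ_x d_G(fav_x, p x))`, compared lexicographically. -/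
noncomputable def PhiPair [Fintype I] (G : SimpleGraph V) (w : ℕ) (tp : I → Bool) (fav : I → V)
    (p : I → V) : ℝ × ℕ :=
  (Phi G w tp p, ∑ x : I, G.dist (fav x) (p x))

/-- The placement obtained from `p` by swapping the locations of agents `x` and `y`. -/
def swapP [DecidableEq I] (p : I → V) (x y : I) : I → V := p ∘ Equiv.swap x y

/-- The agents of type `A`. -/
def typeA [Fintype I] (tp : I → Bool) : Finset I := Finset.univ.filter (fun i => tp i = true)

/-- The agents of type `B`. -/
def typeB [Fintype I] (tp : I → Bool) : Finset I := Finset.univ.filter (fun i => tp i = false)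

/-- A placement is stable for the uniform SSG if no pair of agents can both strictly
decrease their cost by swapping. -/
def uStable (G : SimpleGraph V) (w : ℕ) (τ : ℝ) (tp : I → Bool) (p : I → V)
    [DecidableEq I] : Prop :=
  ∀ x y : I, ¬ (ucost G w τ tp (swapP p x y) x < ucost G w τ tp p x ∧
                ucost G w τ tp (swapP p x y) y < ucost G w τ tp p y)

/-- A placement is stable for the SSG with favorite nodes if no pair of agents can both
strictly lexicographically decrease their cost vector by swapping. -/
def vStable (G : SimpleGraph V) (w : ℕ) (τ : ℝ) (tp : I → Bool) (fav : I → V) (p : I → V)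
    [DecidableEq I] : Prop :=
  ∀ x y : I, ¬ (toLex (vcost G w τ tp fav (swapP p x y) x) < toLex (vcost G w τ tp fav p x) ∧
                toLex (vcost G w τ tp fav (swapP p x y) y) < toLex (vcost G w τ tp fav p y))



open Classical in
/-- The weight of the (ordered) pair of nodes `(u,v)` in the jump-game potential:
`1` if both are occupied by agents of different types, `1/3` if at least one is empty,
and `0` otherwise. -/
noncomputable def edgeW (tp : I → Bool) (p : I → V) (u v : V) : ℝ :=
  if ∃ x y : I, p x = u ∧ p y = v ∧ tp x ≠ tp y then 1
  else if (∀ x : I, p x ≠ u) ∨ (∀ y : I, p y ≠ v) then 1 / 3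
  else 0

open Classical in
/-- The edge-weight potential `Φ(p) = Σ_{e ∈ E} w_e(p)`, written as half the sum over
ordered adjacent pairs (each edge is counted twice, and `edgeW` is symmetric). -/
noncomputable def jumpPhi [Fintype V] (G : SimpleGraph V) (tp : I → Bool) (p : I → V) : ℝ :=
  (1 / 2) * ∑ u : V, ∑ v : V, if G.Adj u v then edgeW tp p u v else 0

/-- A placement is stable for the uniform JSG if no agent can strictly decrease her cost
by jumping to an empty node. -/
def jStable (G : SimpleGraph V) (w : ℕ) (τ : ℝ) (tp : I → Bool) (p : I → V)
    [DecidableEq I] : Prop :=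
  ∀ (x : I) (v : V), v ∉ Set.range p →
    ¬ (ucost G w τ tp (Function.update p x v) x < ucost G w τ tp p x)

/-- The social cost of a placement: the number of unhappy agents together with the total
distance cost, compared lexicographically. -/
noncomputable def socialCost [Fintype I] (G : SimpleGraph V) (w : ℕ) (τ : ℝ) (tp : I → Bool)
    (fav : I → V) (p : I → V) : ℕ × ℕ :=
  ({x : I | ¬ happy G w τ tp p x}.ncard, ∑ x : I, (G.dist (fav x) (p x) + 1))


end Schelling

open Schelling

/-!
Since `p` is injective, an agent's neighbourhood counts depend only on which agents lie within
distance `w` of it, i.e. on the fixed symmetric, irreflexive relation `nbhdRel G w p` on agents,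
and swapping the positions of `x` and `y` amounts to swapping their types. If `x` and `y` have
the same type, the swap merely exchanges their costs, so they cannot both improve. Otherwise, with
`μ = 1` if they are neighbours and `μ = 0` if not, `x` ends up with `d_y - μ` like and `s_y + μ`
unlike neighbours (symmetrically for `y`), while `Φ` changes by `s_x + s_y + 2μ - d_x - d_y`.
An isolated agent pays the maximal cost `τ`, so neither ends up isolated; both improving then
forces `s_x < d_x` and `s_y < d_y` (their ratios were below `τ ≤ 1/2`) together with the two
cross-multiplied ratio inequalities. These exclude `s_x + s_y + 2μ ≥ d_x + d_y`, which would
force `μ = 1` and `d = s + 1` for both agents, and then `s_x < s_y < s_x`.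
-/

namespace Schelling

section Colouring

variable {I : Type*} [Fintype I]

open Classical in
noncomputable def sameNbrs (R : I → I → Prop) (t : I → Bool) (z : I) : ℕ :=
  #{z' | R z z' ∧ t z' = t z}

open Classical in
noncomputable def diffNbrs (R : I → I → Prop) (t : I → Bool) (z : I) : ℕ :=
  #{z' | R z z' ∧ t z' ≠ t z}

open Classical in
lemma sameNbrs_add_diffNbrs (R : I → I → Prop) (t : I → Bool) (z : I) :
    sameNbrs R t z + diffNbrs R t z = #{z' | R z z'} := by
  rw [sameNbrs, diffNbrs, ← filter_filter, ← filter_filter, card_filter_add_card_filter_not]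

lemma sameNbrs_comp_perm (R : I → I → Prop) (t : I → Bool) (σ : Equiv.Perm I) (z : I) :
    sameNbrs (fun a b => R (σ a) (σ b)) t z = sameNbrs R (t ∘ σ.symm) (σ z) :=
  card_equiv σ fun _ => by simp

lemma diffNbrs_comp_perm (R : I → I → Prop) (t : I → Bool) (σ : Equiv.Perm I) (z : I) :
    diffNbrs (fun a b => R (σ a) (σ b)) t z = diffNbrs R (t ∘ σ.symm) (σ z) :=
  card_equiv σ fun _ => by simp

open Classical in
lemma diffNbrs_comp_swap_right [DecidableEq I] {R : I → I → Prop} (hR : ∀ z, ¬ R z z)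
    {t : I → Bool} {u v : I} (huv : t u ≠ t v) :
    diffNbrs R (t ∘ Equiv.swap u v) v = sameNbrs R t v + if R v u then 1 else 0 := by
  have hcolour : ∀ z, z ≠ u → z ≠ v → (t z ≠ t u ↔ t z = t v) := fun z _ _ => by
    revert huv; cases t u <;> cases t v <;> cases t z <;> decide
  have hpoint : ∀ z,
      (if R v z ∧ (t ∘ Equiv.swap u v) z ≠ (t ∘ Equiv.swap u v) v then 1 else 0)
        = (if R v z ∧ t z = t v then 1 else 0) + if z = u ∧ R v z then 1 else 0 := by
    intro z
    rcases eq_or_ne z u with rfl | hzu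
    · simp [huv, Ne.symm huv]
    rcases eq_or_ne z v with rfl | hzv
    · simp [hR z]
    · simp [Equiv.swap_apply_of_ne_of_ne hzu hzv, hcolour z hzu hzv, hzu]
  rw [diffNbrs, sameNbrs, card_filter, card_filter, sum_congr rfl fun z _ => hpoint z,
    sum_add_distrib, add_right_inj]
  simp [ite_and]

lemma sum_sum_eq_two_nsmul_of_symm {ι M : Type*} [Fintype ι] [DecidableEq ι] [AddCommMonoid M]
    (h : ι → ι → M) (S : Finset ι) (hsymm : ∀ a b, h a b = h b a)
    (hS : ∀ a ∈ S, ∀ b ∈ S, h a b = 0) (hSc : ∀ a ∉ S, ∀ b ∉ S, h a b = 0) :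
    ∑ a, ∑ b, h a b = 2 • ∑ a ∈ S, ∑ b, h a b := by
  have hcross : ∑ a ∈ Sᶜ, ∑ b, h a b = ∑ a ∈ S, ∑ b, h a b :=
    calc ∑ a ∈ Sᶜ, ∑ b, h a b = ∑ a ∈ Sᶜ, ∑ b ∈ S, h a b := by
          refine sum_congr rfl fun a ha => ?_
          rw [← sum_add_sum_compl S, sum_eq_zero fun b hb => hSc a (mem_compl.1 ha) b
            (mem_compl.1 hb), add_zero]
      _ = ∑ a ∈ S, ∑ b ∈ Sᶜ, h a b := by rw [sum_comm]; simp only [hsymm]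
      _ = ∑ a ∈ S, ∑ b, h a b := by
          refine sum_congr rfl fun a ha => ?_
          rw [← sum_add_sum_compl S, sum_eq_zero fun b hb => hS a ha b hb, zero_add]
  rw [← sum_add_sum_compl S, hcross, two_nsmul]

lemma sum_diffNbrs_comp_swap [DecidableEq I] {R : I → I → Prop}
    (hsymm : ∀ a b, R a b → R b a) (t : I → Bool) {u v : I} (huv : u ≠ v) :
    ∑ z, diffNbrs R (t ∘ Equiv.swap u v) z + 2 * (diffNbrs R t u + diffNbrs R t v)
      = ∑ z, diffNbrs R t z
        + 2 * (diffNbrs R (t ∘ Equiv.swap u v) u + diffNbrs R (t ∘ Equiv.swap u v) v) := by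
  classical
  set t' := t ∘ Equiv.swap u v
  let h : I → I → ℤ := fun a b =>
    (if R a b ∧ t' b ≠ t' a then 1 else 0) - if R a b ∧ t b ≠ t a then 1 else 0
  have hrow : ∀ a, ∑ b, h a b = (diffNbrs R t' a : ℤ) - diffNbrs R t a := fun a => by
    simp only [h, diffNbrs, card_filter, sum_sub_distrib, Nat.cast_sum, Nat.cast_ite,
      Nat.cast_one, Nat.cast_zero]
  have hsymm' : ∀ a b, h a b = h b a := fun a b => by
    simp only [h, ne_comm (a := t' a), ne_comm (a := t a), Iff.intro (hsymm a b) (hsymm b a)]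
  have hin : ∀ a ∈ ({u, v} : Finset I), ∀ b ∈ ({u, v} : Finset I), h a b = 0 := by
    simp only [mem_insert, mem_singleton]
    rintro a (rfl | rfl) b (rfl | rfl) <;> simp [h, t', ne_comm]
  have hout : ∀ a ∉ ({u, v} : Finset I), ∀ b ∉ ({u, v} : Finset I), h a b = 0 := by
    simp only [mem_insert, mem_singleton, not_or]
    rintro a ⟨hau, hav⟩ b ⟨hbu, hbv⟩
    simp [h, t', Equiv.swap_apply_of_ne_of_ne hau hav, Equiv.swap_apply_of_ne_of_ne hbu hbv]
  have hsum := sum_sum_eq_two_nsmul_of_symm h {u, v} hsymm' hin hout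
  simp only [hrow, sum_sub_distrib, sum_pair huv, two_nsmul] at hsum
  zify
  linarith

end Colouring

section Cost

noncomputable def ratioCost (τ : ℝ) (s d : ℕ) : ℝ :=
  if s + d = 0 then τ else max 0 (τ - s / (s + d))

lemma ratioCost_le {τ : ℝ} (hτ : 0 ≤ τ) (s d : ℕ) : ratioCost τ s d ≤ τ := by
  unfold ratioCost
  split_ifs
  · exact le_rfl
  · exact max_le hτ (sub_le_self _ (by positivity))

lemma add_ne_zero_of_ratioCost_lt {τ : ℝ} (hτ : 0 ≤ τ) {s d s' d' : ℕ}
    (h : ratioCost τ s' d' < ratioCost τ s d) : s' + d' ≠ 0 := by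
  intro h0
  rw [ratioCost, if_pos h0] at h
  exact (ratioCost_le hτ s d).not_gt h

lemma lt_and_mul_lt_of_ratioCost_lt {τ : ℝ} (hτ : τ ≤ 1 / 2) {s d s' d' : ℕ}
    (hsd : s + d ≠ 0) (hsd' : s' + d' ≠ 0) (h : ratioCost τ s' d' < ratioCost τ s d) :
    s < d ∧ s * (s' + d') < s' * (s + d) := by
  have hpos : (0 : ℝ) < s + d := by exact_mod_cast Nat.pos_of_ne_zero hsd
  have hpos' : (0 : ℝ) < s' + d' := by exact_mod_cast Nat.pos_of_ne_zero hsd'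
  rw [ratioCost, if_neg hsd', ratioCost, if_neg hsd] at h
  have hgain : 0 < τ - s / (s + d) := by
    by_contra! hle
    rw [max_eq_left hle] at h
    exact (le_max_left _ _).not_gt h
  rw [max_eq_right hgain.le] at h
  have hunhappy : (s : ℝ) / (s + d) < 1 / 2 := by linarith
  have hratio : (s : ℝ) / (s + d) < s' / (s' + d') := by
    linarith [le_max_right 0 (τ - s' / (s' + d'))]
  constructor
  · rw [div_lt_iff₀ hpos] at hunhappy
    exact_mod_cast (by linarith : (s : ℝ) < d)
  · rw [div_lt_div_iff₀ hpos hpos'] at hratio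
    exact_mod_cast hratio

lemma add_add_two_mul_lt_of_cross_mul_lt {su du sv dv su' sv' μ : ℕ} (hμ : μ ≤ 1)
    (hu : su < du) (hv : sv < dv) (hu' : su' + μ = du) (hv' : sv' + μ = dv)
    (hcu : su * (sv + dv) < sv' * (su + du)) (hcv : sv * (su + du) < su' * (sv + dv)) :
    su + sv + 2 * μ < du + dv := by
  by_contra! hle
  obtain rfl : du = su + 1 := by omega
  obtain rfl : dv = sv + 1 := by omega
  obtain rfl : μ = 1 := by omega
  obtain rfl : su' = su := by omega
  obtain rfl : sv' = sv := by omega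
  nlinarith

end Cost

section SwapInColouring

variable {I : Type*} [Fintype I]

noncomputable def nbrCost (R : I → I → Prop) (τ : ℝ) (t : I → Bool) (z : I) : ℝ :=
  ratioCost τ (sameNbrs R t z) (diffNbrs R t z)

theorem sum_diffNbrs_comp_swap_lt [DecidableEq I] {R : I → I → Prop}
    (hsymm : ∀ a b, R a b → R b a) (hirrefl : ∀ z, ¬ R z z) {τ : ℝ} (hτ0 : 0 ≤ τ)
    (hτ : τ ≤ 1 / 2) {t : I → Bool} {u v : I}
    (hu : nbrCost R τ (t ∘ Equiv.swap u v) v < nbrCost R τ t u)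
    (hv : nbrCost R τ (t ∘ Equiv.swap u v) u < nbrCost R τ t v) :
    ∑ z, diffNbrs R (t ∘ Equiv.swap u v) z < ∑ z, diffNbrs R t z := by
  classical
  by_cases htuv : t u = t v
  · have ht' : t ∘ Equiv.swap u v = t := by
      rw [Equiv.comp_swap_eq_update, htuv, Function.update_eq_self, ← htuv,
        Function.update_eq_self]
    rw [ht'] at hu hv
    exact absurd (hu.trans hv) (lt_irrefl _)
  have huv : u ≠ v := fun h => htuv (congrArg t h)
  have hsum := sum_diffNbrs_comp_swap hsymm t huv
  set t' := t ∘ Equiv.swap u v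
  have hdeg : ∀ z, sameNbrs R t' z + diffNbrs R t' z = sameNbrs R t z + diffNbrs R t z :=
    fun z => by rw [sameNbrs_add_diffNbrs, sameNbrs_add_diffNbrs]
  set μ := if R u v then 1 else 0
  have hdu : diffNbrs R t' u = sameNbrs R t u + μ := by
    have h := diffNbrs_comp_swap_right hirrefl (Ne.symm htuv)
    rwa [Equiv.swap_comm] at h
  have hdv : diffNbrs R t' v = sameNbrs R t v + μ := by
    rw [diffNbrs_comp_swap_right hirrefl htuv, if_congr ⟨hsymm v u, hsymm u v⟩ rfl rfl]
  have hnu' := add_ne_zero_of_ratioCost_lt hτ0 hv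
  have hnv' := add_ne_zero_of_ratioCost_lt hτ0 hu
  obtain ⟨hu1, hu2⟩ := lt_and_mul_lt_of_ratioCost_lt hτ (hdeg u ▸ hnu') hnv' hu
  obtain ⟨hv1, hv2⟩ := lt_and_mul_lt_of_ratioCost_lt hτ (hdeg v ▸ hnv') hnu' hv
  rw [hdeg] at hu2 hv2
  have hμ : μ ≤ 1 := by simp only [μ]; split_ifs <;> simp
  have hgap := add_add_two_mul_lt_of_cross_mul_lt hμ hu1 hv1
    (by linarith [hdeg u]) (by linarith [hdeg v]) hu2 hv2
  omega

end SwapInColouring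

section Placement

variable {V I : Type*}

def nbhdRel (G : SimpleGraph V) (w : ℕ) (p : I → V) (a b : I) : Prop :=
  p b ∈ nbhd G w (p a)

lemma nbhdRel_symm (G : SimpleGraph V) (w : ℕ) (p : I → V) (a b : I) :
    nbhdRel G w p a b → nbhdRel G w p b a :=
  fun ⟨hne, hdist⟩ => ⟨hne.symm, G.dist_comm ▸ hdist⟩

lemma nbhdRel_irrefl (G : SimpleGraph V) (w : ℕ) (p : I → V) (a : I) : ¬ nbhdRel G w p a a :=
  fun h => h.1 rfl

lemma ncard_occupied {p : I → V} (hp : Function.Injective p) (N : Set V) (P : I → Prop) :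
    {v | v ∈ N ∧ ∃ y, p y = v ∧ P y}.ncard = {y | p y ∈ N ∧ P y}.ncard := by
  rw [← Set.ncard_image_of_injective _ hp]
  congr 1
  ext v
  constructor
  · rintro ⟨hv, y, rfl, hy⟩; exact ⟨y, ⟨hv, hy⟩, rfl⟩
  · rintro ⟨y, ⟨hv, hy⟩, rfl⟩; exact ⟨hv, y, rfl, hy⟩

variable [Fintype I]

lemma sCount_eq_sameNbrs (G : SimpleGraph V) (w : ℕ) (tp : I → Bool) {p : I → V}
    (hp : Function.Injective p) (z : I) :
    sCount G w tp p z = sameNbrs (nbhdRel G w p) tp z := by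
  rw [sCount, ncard_occupied hp, sameNbrs, ← Set.ncard_coe_finset, coe_filter]
  simp only [mem_univ, true_and]
  rfl

lemma dCount_eq_diffNbrs (G : SimpleGraph V) (w : ℕ) (tp : I → Bool) {p : I → V}
    (hp : Function.Injective p) (z : I) :
    dCount G w tp p z = diffNbrs (nbhdRel G w p) tp z := by
  rw [dCount, ncard_occupied hp, diffNbrs, ← Set.ncard_coe_finset, coe_filter]
  simp only [mem_univ, true_and]
  rfl

lemma ucost_eq_nbrCost (G : SimpleGraph V) (w : ℕ) (τ : ℝ) (tp : I → Bool) {p : I → V}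
    (hp : Function.Injective p) (z : I) :
    ucost G w τ tp p z = nbrCost (nbhdRel G w p) τ tp z := by
  rw [nbrCost, ← sCount_eq_sameNbrs G w tp hp, ← dCount_eq_diffNbrs G w tp hp]
  rfl

lemma ucost_comp_perm (G : SimpleGraph V) (w : ℕ) (τ : ℝ) (tp : I → Bool) {p : I → V}
    (hp : Function.Injective p) (σ : Equiv.Perm I) (z : I) :
    ucost G w τ tp (p ∘ σ) z = nbrCost (nbhdRel G w p) τ (tp ∘ σ.symm) (σ z) := by
  rw [ucost_eq_nbrCost G w τ tp (hp.comp σ.injective), nbrCost, nbrCost]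
  exact congrArg₂ _ (sameNbrs_comp_perm (nbhdRel G w p) tp σ z)
    (diffNbrs_comp_perm (nbhdRel G w p) tp σ z)

lemma Phi_eq_sum_diffNbrs (G : SimpleGraph V) (w : ℕ) (tp : I → Bool) {p : I → V}
    (hp : Function.Injective p) :
    Phi G w tp p = 1 / 2 * ∑ z, (diffNbrs (nbhdRel G w p) tp z : ℝ) := by
  simp only [Phi, dCount_eq_diffNbrs G w tp hp]

lemma Phi_comp_perm (G : SimpleGraph V) (w : ℕ) (tp : I → Bool) {p : I → V}
    (hp : Function.Injective p) (σ : Equiv.Perm I) :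
    Phi G w tp (p ∘ σ) = 1 / 2 * ∑ z, (diffNbrs (nbhdRel G w p) (tp ∘ σ.symm) z : ℝ) := by
  rw [Phi_eq_sum_diffNbrs G w tp (hp.comp σ.injective),
    ← Equiv.sum_comp σ fun z => (diffNbrs (nbhdRel G w p) (tp ∘ σ.symm) z : ℝ)]
  simp only [← diffNbrs_comp_perm (nbhdRel G w p)]
  rfl

end Placement

end Schelling

theorem uSSG_Phi_is_potential_general {V I : Type*} [Fintype I] [DecidableEq I]
    (G : SimpleGraph V) (w : ℕ) (τ : ℝ) (hτ0 : 0 ≤ τ) (hτ : τ ≤ 1 / 2)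
    (tp : I → Bool) (p : I → V) (hp : Function.Bijective p) (x y : I)
    (hx : ucost G w τ tp (swapP p x y) x < ucost G w τ tp p x)
    (hy : ucost G w τ tp (swapP p x y) y < ucost G w τ tp p y) :
    Phi G w tp (swapP p x y) < Phi G w tp p := by
  simp only [swapP, ucost_comp_perm G w τ tp hp.1, ucost_eq_nbrCost G w τ tp hp.1,
    Equiv.symm_swap, Equiv.swap_apply_left, Equiv.swap_apply_right] at hx hy
  rw [swapP, Phi_comp_perm G w tp hp.1, Phi_eq_sum_diffNbrs G w tp hp.1, Equiv.symm_swap]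
  have hlt := sum_diffNbrs_comp_swap_lt (nbhdRel_symm G w p) (nbhdRel_irrefl G w p)
    hτ0 hτ hx hy
  exact mul_lt_mul_of_pos_left (by exact_mod_cast hlt) one_half_pos

/-- In the uniform swap Schelling game with tolerance parameter `τ ≤ 1/2`,
the number of colored pairs `Φ` is an ordinal potential function: for every window size
`w ≥ 1`, every finite connected graph `G`, every bijective placement `p` and every improving
swap of two agents producing the placement `p'`, one has `Φ(p') < Φ(p)`.  Consequently the
u-SSG is a potential game. -/
theorem uSSG_Phi_is_potential {V I : Type*} [Fintype V] [Fintype I] [DecidableEq I]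
    (G : SimpleGraph V) (hG : G.Connected)
    (w : ℕ) (hw : 1 ≤ w)
    (τ : ℝ) (hτ0 : 0 ≤ τ) (hτ : τ ≤ 1 / 2)
    (tp : I → Bool) (hA : 2 ≤ (typeA tp).card) (hB : 2 ≤ (typeB tp).card)
    (p : I → V) (hp : Function.Bijective p)
    (x y : I)
    (hx : ucost G w τ tp (swapP p x y) x < ucost G w τ tp p x)
    (hy : ucost G w τ tp (swapP p x y) y < ucost G w τ tp p y) :
    Phi G w tp (swapP p x y) < Phi G w tp p :=
  uSSG_Phi_is_potential_general G w τ hτ0 hτ tp p hp x y hx hy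
end

section
/- The number of colored pairs Φ is not an ordinal potential function for the swap Schelling game with favorite nodes: there exist a finite connected graph G, window size w = 1, tolerance parameter τ = 0.3, disjoint agent sets A and B, a common favorite node for all agents, a bijective placement p, and an improving swap of two agents producing the placement p' such that Φ(p') > Φ(p). -/
open SimpleGraph Finset

open Schelling

/-!
Take the tree on `Fin 6` formed by the star with centre `0` and leaves `1, 3, 4, 5`, plus the
edge `1 - 2`; put agents of type `A` on `2, 3` and of type `B` on `0, 1, 4, 5`, all favouring
node `2`. The `A`-agent on the leaf `2` sees only a `B`-agent, so its cost is `τ = 3/10`; at the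
centre it would see one `A`-agent among four neighbours, cost `3/10 - 1/4`. The `B`-agent on the
centre stays happy when moved to `2` and reaches its favourite node. So swapping them is
improving, yet the colored edges go from `{0 - 3, 1 - 2}` to `{0 - 1, 0 - 4, 0 - 5}`.
-/

namespace Schelling

variable {V I : Type*} {G : SimpleGraph V}

theorem nbhd_one_eq_neighborSet (hG : G.Connected) (u : V) : nbhd G 1 u = G.neighborSet u := by
  ext v
  refine ⟨fun ⟨hne, hle⟩ => ?_, fun h => ⟨h.ne.symm, (dist_eq_one_iff_adj.mpr h).le⟩⟩
  exact dist_eq_one_iff_adj.mp (le_antisymm hle (hG.pos_dist_of_ne hne.symm))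

section Counting

variable [Fintype V] [DecidableEq V] [Fintype I] [DecidableRel G.Adj]

theorem ncard_occupied_nbhd_one (hG : G.Connected) (p : I → V) (P : I → Prop) [DecidablePred P]
    (u : V) :
    {v | v ∈ nbhd G 1 u ∧ ∃ y, p y = v ∧ P y}.ncard = #{v | G.Adj u v ∧ ∃ y, p y = v ∧ P y} := by
  simp only [nbhd_one_eq_neighborSet hG, mem_neighborSet, Set.ncard_eq_toFinset_card',
    Set.toFinset_ofPred]

theorem ucost_one_eq (hG : G.Connected) (τ : ℝ) {tp : I → Bool} {p : I → V} {x : I} {s d : ℕ}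
    (hs : #{v | G.Adj (p x) v ∧ ∃ y, p y = v ∧ tp y = tp x} = s)
    (hd : #{v | G.Adj (p x) v ∧ ∃ y, p y = v ∧ tp y ≠ tp x} = d) :
    ucost G 1 τ tp p x = if s + d = 0 then τ else max 0 (τ - s / (s + d)) := by
  simp only [ucost, sCount, dCount, ncard_occupied_nbhd_one hG, hs, hd]

theorem Phi_one_eq (hG : G.Connected) {tp : I → Bool} {p : I → V} {n : ℕ}
    (h : ∑ x, #{v | G.Adj (p x) v ∧ ∃ y, p y = v ∧ tp y ≠ tp x} = n) :
    Phi G 1 tp p = n / 2 := by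
  simp only [Phi, dCount, ncard_occupied_nbhd_one hG, ← h]
  push_cast
  ring

end Counting

end Schelling

namespace Schelling.PhiCounterexample

abbrev graph : SimpleGraph (Fin 6) :=
  SimpleGraph.fromRel fun a b => (a = 0 ∧ b ∈ ({1, 3, 4, 5} : Finset (Fin 6))) ∨ (a = 1 ∧ b = 2)

theorem graph_connected : graph.Connected := by
  have h : ∀ v, graph.Reachable 0 v := by
    intro v
    fin_cases v
    · rfl
    all_goals first
      | exact Adj.reachable (by decide)
      | exact (Adj.reachable (show graph.Adj 0 1 by decide)).trans (Adj.reachable (by decide))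
  exact Connected.mk fun u v => (h u).symm.trans (h v)

def type : Fin 6 → Bool := ![false, false, true, true, false, false]

theorem ucost_two_before : ucost graph 1 (3 / 10) type id 2 = 3 / 10 := by
  rw [ucost_one_eq graph_connected _ (s := 0) (d := 1) (by decide) (by decide)]
  norm_num

theorem ucost_two_after : ucost graph 1 (3 / 10) type (swapP id 2 0) 2 = 1 / 20 := by
  rw [ucost_one_eq graph_connected _ (s := 1) (d := 3) (by decide) (by decide)]
  norm_num

theorem ucost_zero_before : ucost graph 1 (3 / 10) type id 0 = 0 := by
  rw [ucost_one_eq graph_connected _ (s := 3) (d := 1) (by decide) (by decide)]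
  norm_num

theorem ucost_zero_after : ucost graph 1 (3 / 10) type (swapP id 2 0) 0 = 0 := by
  rw [ucost_one_eq graph_connected _ (s := 1) (d := 0) (by decide) (by decide)]
  norm_num

theorem Phi_before : Phi graph 1 type id = 2 := by
  rw [Phi_one_eq graph_connected (n := 4) (by decide)]
  norm_num

theorem Phi_after : Phi graph 1 type (swapP id 2 0) = 3 := by
  rw [Phi_one_eq graph_connected (n := 6) (by decide)]
  norm_num

end Schelling.PhiCounterexample

open Schelling.PhiCounterexample in
/-- The number of colored pairs `Φ` is not an ordinal potential function for
the swap Schelling game with favorite nodes: there exist a finite connected graph `G`,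
window size `w = 1`, tolerance `τ = 0.3`, disjoint agent sets, a common favorite node, a
bijective placement `p` and an improving swap producing `p'` with `Φ(p') > Φ(p)`. -/
theorem cfSSG_Phi_not_potential :
    ∃ (V : Type) (_ : Fintype V) (I : Type) (_ : Fintype I) (_ : DecidableEq I)
      (G : SimpleGraph V) (tp : I → Bool) (fav : I → V) (p : I → V) (x y : I),
      G.Connected ∧
      (∃ v0 : V, ∀ i : I, fav i = v0) ∧
      2 ≤ (typeA tp).card ∧ 2 ≤ (typeB tp).card ∧
      Function.Bijective p ∧
      toLex (vcost G 1 (3 / 10) tp fav (swapP p x y) x) <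
        toLex (vcost G 1 (3 / 10) tp fav p x) ∧
      toLex (vcost G 1 (3 / 10) tp fav (swapP p x y) y) <
        toLex (vcost G 1 (3 / 10) tp fav p y) ∧
      Phi G 1 tp p < Phi G 1 tp (swapP p x y) := by
  refine ⟨Fin 6, inferInstance, Fin 6, inferInstance, inferInstance, graph, type, fun _ => 2, id,
    2, 0, graph_connected, ⟨2, fun _ => rfl⟩, by decide, by decide, Function.bijective_id,
    ?_, ?_, ?_⟩
  · refine Prod.Lex.toLex_lt_toLex.mpr (Or.inl ?_)
    simp only [vcost, ucost_two_before, ucost_two_after]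
    norm_num
  · have h_moves_to_favourite : swapP id (2 : Fin 6) 0 0 = 2 := by decide
    refine Prod.Lex.toLex_lt_toLex.mpr (Or.inr ⟨?_, ?_⟩)
    · simp only [vcost, ucost_zero_before, ucost_zero_after]
    · simpa [vcost, h_moves_to_favourite] using graph_connected.pos_dist_of_ne (by decide)
  · rw [Phi_before, Phi_after]
    norm_num
end

section
/- In the uniform swap Schelling game on a regular network (for any tolerance parameter τ ∈ [0,1]), the number of colored pairs Φ is an ordinal potential function: for every window size w ≥ 1, if G is such that every node has the same number k of nodes within distance w (|N_w(u)| = k for all u ∈ V), then for every bijective placement p and every improving swap producing the placement p', one has Φ(p') < Φ(p). Consequently the u-SSG on regular networks is a potential game. -/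
open SimpleGraph Finset

open Schelling

section Aux

variable {V I : Type*} [Fintype V]

open Classical in
/-- indicator that `b` is in the neighborhood of `a` and of different color -/
noncomputable def auxChi (G : SimpleGraph V) (w : ℕ) (t : V → Bool) (a b : V) : ℕ :=
  if b ∈ nbhd G w a ∧ t b ≠ t a then 1 else 0

noncomputable def auxF (G : SimpleGraph V) (w : ℕ) (t : V → Bool) (a : V) : ℕ :=
  ∑ b : V, auxChi G w t a b

lemma auxChi_symm (G : SimpleGraph V) (w : ℕ) (t : V → Bool) (a b : V) :
    auxChi G w t a b = auxChi G w t b a := by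
  classical
  unfold auxChi
  refine if_congr ?_ rfl rfl
  unfold nbhd
  simp only [Set.mem_setOf_eq]
  constructor
  · rintro ⟨⟨h1, h2⟩, h3⟩
    exact ⟨⟨h1.symm, by rwa [SimpleGraph.dist_comm]⟩, h3.symm⟩
  · rintro ⟨⟨h1, h2⟩, h3⟩
    exact ⟨⟨h1.symm, by rwa [SimpleGraph.dist_comm]⟩, h3.symm⟩

lemma auxChi_self (G : SimpleGraph V) (w : ℕ) (t : V → Bool) (a : V) :
    auxChi G w t a a = 0 := by
  classical
  unfold auxChi nbhd
  simp

lemma aux_split [DecidableEq V] (f : V → V → ℕ) (hsymm : ∀ a b, f a b = f b a) (S : Finset V) :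
    ∑ a : V, ∑ b : V, f a b + ∑ a ∈ S, ∑ b ∈ S, f a b
      = 2 * ∑ a ∈ S, ∑ b : V, f a b + ∑ a ∈ Sᶜ, ∑ b ∈ Sᶜ, f a b := by
  have h2 : ∑ a ∈ Sᶜ, ∑ b ∈ S, f a b = ∑ a ∈ S, ∑ b ∈ Sᶜ, f a b := by
    rw [Finset.sum_comm]
    exact Finset.sum_congr rfl fun a _ => Finset.sum_congr rfl fun b _ => hsymm b a
  have e1 : ∑ a : V, ∑ b : V, f a b
      = ∑ a ∈ S, ∑ b : V, f a b + ∑ a ∈ Sᶜ, ∑ b : V, f a b :=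
    (Finset.sum_add_sum_compl S _).symm
  have e2 : ∀ a : V, ∑ b : V, f a b = ∑ b ∈ S, f a b + ∑ b ∈ Sᶜ, f a b := fun a =>
    (Finset.sum_add_sum_compl S _).symm
  have e3 : ∑ a ∈ Sᶜ, ∑ b : V, f a b
      = ∑ a ∈ Sᶜ, ∑ b ∈ S, f a b + ∑ a ∈ Sᶜ, ∑ b ∈ Sᶜ, f a b := by
    rw [← Finset.sum_add_distrib]
    exact Finset.sum_congr rfl fun a _ => e2 a
  have e4 : ∑ a ∈ S, ∑ b : V, f a b
      = ∑ a ∈ S, ∑ b ∈ S, f a b + ∑ a ∈ S, ∑ b ∈ Sᶜ, f a b := by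
    rw [← Finset.sum_add_distrib]
    exact Finset.sum_congr rfl fun a _ => e2 a
  omega

lemma aux_key [DecidableEq V] (G : SimpleGraph V) (w : ℕ) (t t' : V → Bool) (u v : V) (huv : u ≠ v)
    (ht'u : t' u = t v) (ht'v : t' v = t u) (ht' : ∀ b, b ≠ u → b ≠ v → t' b = t b) :
    ∑ a : V, auxF G w t' a + 2 * (auxF G w t u + auxF G w t v)
      = ∑ a : V, auxF G w t a + 2 * (auxF G w t' u + auxF G w t' v) := by
  classical
  set S : Finset V := {u, v} with hS
  have hmem : ∀ a : V, a ∈ S ↔ a = u ∨ a = v := by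
    intro a; simp [hS]
  have hsplit := aux_split (auxChi G w t) (auxChi_symm G w t) S
  have hsplit' := aux_split (auxChi G w t') (auxChi_symm G w t') S
  -- compl parts agree
  have hcompl : ∑ a ∈ Sᶜ, ∑ b ∈ Sᶜ, auxChi G w t' a b
      = ∑ a ∈ Sᶜ, ∑ b ∈ Sᶜ, auxChi G w t a b := by
    refine Finset.sum_congr rfl fun a ha => Finset.sum_congr rfl fun b hb => ?_
    rw [Finset.mem_compl, hmem] at ha hb
    push_neg at ha hb
    unfold auxChi
    rw [ht' a ha.1 ha.2, ht' b hb.1 hb.2]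
  -- S×S parts agree
  have hSsum : ∀ s : V → Bool, ∑ a ∈ S, ∑ b ∈ S, auxChi G w s a b
      = auxChi G w s u v + auxChi G w s v u := by
    intro s
    rw [hS, Finset.sum_pair huv]
    rw [Finset.sum_pair huv, Finset.sum_pair huv]
    rw [auxChi_self, auxChi_self]
    omega
  have hSS : ∑ a ∈ S, ∑ b ∈ S, auxChi G w t' a b = ∑ a ∈ S, ∑ b ∈ S, auxChi G w t a b := by
    rw [hSsum, hSsum]
    have h1 : auxChi G w t' u v = auxChi G w t u v := by
      unfold auxChi
      refine if_congr ?_ rfl rfl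
      rw [ht'u, ht'v]
      constructor
      · rintro ⟨h, h2⟩; exact ⟨h, fun hc => h2 hc.symm⟩
      · rintro ⟨h, h2⟩; exact ⟨h, fun hc => h2 hc.symm⟩
    have h2 : auxChi G w t' v u = auxChi G w t v u := by
      unfold auxChi
      refine if_congr ?_ rfl rfl
      rw [ht'u, ht'v]
      constructor
      · rintro ⟨h, h2⟩; exact ⟨h, fun hc => h2 hc.symm⟩
      · rintro ⟨h, h2⟩; exact ⟨h, fun hc => h2 hc.symm⟩
    omega
  -- S row sums are auxF
  have hrow : ∀ s : V → Bool, ∑ a ∈ S, ∑ b : V, auxChi G w s a b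
      = auxF G w s u + auxF G w s v := by
    intro s
    rw [hS, Finset.sum_pair huv]
    rfl
  have hFsum : ∀ s : V → Bool, ∑ a : V, auxF G w s a = ∑ a : V, ∑ b : V, auxChi G w s a b :=
    fun s => rfl
  rw [hFsum, hFsum, ← hrow, ← hrow]
  rw [hrow t, hrow t'] at *
  omega

end Aux

section Aux2

variable {V I : Type*} [Fintype V] [Fintype I]

lemma aux_ncard_setOf (P : V → Prop) [DecidablePred P] :
    {b | P b}.ncard = ∑ b : V, if P b then 1 else 0 := by
  rw [Set.ncard_eq_toFinset_card _ (Set.toFinite _)]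
  rw [show (Set.toFinite {b | P b}).toFinset = Finset.univ.filter P by ext; simp]
  exact Finset.card_filter _ _

/-- `dCount` in terms of the color function on nodes. -/
lemma aux_dCount (G : SimpleGraph V) (w : ℕ) (tp : I → Bool) (q : I → V)
    (hq : Function.Bijective q) (z : I) :
    dCount G w tp q z = auxF G w (fun b => tp ((Equiv.ofBijective q hq).symm b)) (q z) := by
  classical
  set e := Equiv.ofBijective q hq with he
  have hsymm : ∀ i : I, e.symm (q i) = i := fun i => e.symm_apply_apply i
  unfold dCount
  have hset : {v | v ∈ nbhd G w (q z) ∧ ∃ y, q y = v ∧ tp y ≠ tp z}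
      = {b | b ∈ nbhd G w (q z) ∧ tp (e.symm b) ≠ tp (e.symm (q z))} := by
    ext b
    simp only [Set.mem_setOf_eq]
    constructor
    · rintro ⟨hn, y, hyv, hty⟩
      refine ⟨hn, ?_⟩
      rw [← hyv, hsymm y, hsymm z]
      exact hty
    · rintro ⟨hn, hty⟩
      refine ⟨hn, e.symm b, e.apply_symm_apply b, ?_⟩
      rwa [hsymm z] at hty
  rw [hset, aux_ncard_setOf]
  unfold auxF auxChi
  refine Finset.sum_congr rfl fun b _ => ?_
  have : tp (e.symm (q z)) = tp (e.symm (q z)) := rfl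
  congr 1

/-- `sCount + dCount` is the size of the neighborhood, for bijective placements. -/
lemma aux_total (G : SimpleGraph V) (w : ℕ) (tp : I → Bool) (q : I → V)
    (hq : Function.Bijective q) (z : I) :
    sCount G w tp q z + dCount G w tp q z = (nbhd G w (q z)).ncard := by
  classical
  unfold sCount dCount
  rw [← Set.ncard_union_eq]
  · congr 1
    ext b
    simp only [Set.mem_union, Set.mem_setOf_eq]
    constructor
    · rintro (⟨h, _⟩ | ⟨h, _⟩) <;> exact h
    · intro h
      obtain ⟨y, hy⟩ := hq.2 b
      by_cases hty : tp y = tp z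
      · exact Or.inl ⟨h, y, hy, hty⟩
      · exact Or.inr ⟨h, y, hy, hty⟩
  · rw [Set.disjoint_left]
    rintro b ⟨_, y1, hy1, ht1⟩ ⟨_, y2, hy2, ht2⟩
    exact ht2 (by rw [hq.1 (hy2.trans hy1.symm)]; exact ht1)

/-- From a strict decrease of ucost, a strict decrease of dCount. -/
lemma aux_improve (τ : ℝ) (k s d s' d' : ℕ) (hk : 0 < k) (h : s + d = k) (h' : s' + d' = k)
    (hlt : max 0 (τ - (s' : ℝ) / ((s' : ℝ) + (d' : ℝ)))
         < max 0 (τ - (s : ℝ) / ((s : ℝ) + (d : ℝ)))) : d' < d := by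
  have hsd : (s : ℝ) + (d : ℝ) = (k : ℝ) := by exact_mod_cast congrArg (Nat.cast : ℕ → ℝ) h
  have hsd' : (s' : ℝ) + (d' : ℝ) = (k : ℝ) := by exact_mod_cast congrArg (Nat.cast : ℕ → ℝ) h'
  have hkR : (0 : ℝ) < (k : ℝ) := by exact_mod_cast hk
  rw [hsd, hsd'] at hlt
  have hpos : 0 < τ - (s : ℝ) / (k : ℝ) := by
    rcases le_or_gt (τ - (s : ℝ) / (k : ℝ)) 0 with hle | hgt
    · rw [max_eq_left hle] at hlt
      exact absurd hlt (not_lt.mpr (le_max_left _ _))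
    · exact hgt
  rw [max_eq_right hpos.le] at hlt
  have h2 : τ - (s' : ℝ) / (k : ℝ) < τ - (s : ℝ) / (k : ℝ) :=
    lt_of_le_of_lt (le_max_right _ _) hlt
  have h3 : (s : ℝ) / (k : ℝ) < (s' : ℝ) / (k : ℝ) := by linarith
  have h4 : (s : ℝ) < (s' : ℝ) := by
    have := (div_lt_div_iff_of_pos_right hkR).mp h3
    exact this
  have : s < s' := by exact_mod_cast h4
  omega

end Aux2

/-- In the uniform swap Schelling game on a regular network (any
`τ ∈ [0,1]`), the number of colored pairs `Φ` is an ordinal potential function: for every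
`w ≥ 1`, if every node of `G` has the same number `k` of nodes within distance `w`, then
every improving swap strictly decreases `Φ`.  Consequently the u-SSG on regular networks
is a potential game. -/
theorem uSSG_regular_Phi_is_potential {V I : Type*} [Fintype V] [Fintype I] [DecidableEq I]
    (G : SimpleGraph V) (hG : G.Connected)
    (w : ℕ) (hw : 1 ≤ w)
    (k : ℕ) (hreg : ∀ u : V, (nbhd G w u).ncard = k)
    (τ : ℝ) (hτ0 : 0 ≤ τ) (hτ1 : τ ≤ 1)
    (tp : I → Bool) (hA : 2 ≤ (typeA tp).card) (hB : 2 ≤ (typeB tp).card)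
    (p : I → V) (hp : Function.Bijective p)
    (x y : I)
    (hx : ucost G w τ tp (swapP p x y) x < ucost G w τ tp p x)
    (hy : ucost G w τ tp (swapP p x y) y < ucost G w τ tp p y) :
    Phi G w tp (swapP p x y) < Phi G w tp p := by
  classical
  -- x ≠ y
  have hxy : x ≠ y := by
    rintro rfl
    rw [show swapP p x x = p by funext z; simp [swapP]] at hx
    exact lt_irrefl _ hx
  set p' : I → V := swapP p x y with hp'def
  have hp' : Function.Bijective p' := hp.comp (Equiv.swap x y).bijective
  set u : V := p x with hu
  set v : V := p y with hv
  have huv : u ≠ v := fun h => hxy (hp.1 h)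
  set e : I ≃ V := Equiv.ofBijective p hp with he
  set e' : I ≃ V := Equiv.ofBijective p' hp' with he'
  set t : V → Bool := fun b => tp (e.symm b) with ht
  set t' : V → Bool := fun b => tp (e'.symm b) with ht'
  have hsymm : ∀ i : I, e.symm (p i) = i := fun i => e.symm_apply_apply i
  have hsymm' : ∀ b : V, e'.symm b = Equiv.swap x y (e.symm b) := by
    intro b
    rw [Equiv.symm_apply_eq]
    show b = p' (Equiv.swap x y (e.symm b))
    rw [hp'def]
    show b = p (Equiv.swap x y (Equiv.swap x y (e.symm b)))
    rw [Equiv.swap_apply_self]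
    exact (e.apply_symm_apply b).symm
  -- the color maps
  have ht'u : t' u = t v := by
    show tp (e'.symm u) = tp (e.symm v)
    rw [hsymm', hu, hv, hsymm x, hsymm y, Equiv.swap_apply_left]
  have ht'v : t' v = t u := by
    show tp (e'.symm v) = tp (e.symm u)
    rw [hsymm', hu, hv, hsymm x, hsymm y, Equiv.swap_apply_right]
  have ht'o : ∀ b, b ≠ u → b ≠ v → t' b = t b := by
    intro b hbu hbv
    show tp (e'.symm b) = tp (e.symm b)
    rw [hsymm']
    congr 1
    apply Equiv.swap_apply_of_ne_of_ne
    · intro h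
      exact hbu (by rw [hu, ← h]; exact (e.apply_symm_apply b).symm)
    · intro h
      exact hbv (by rw [hv, ← h]; exact (e.apply_symm_apply b).symm)
  -- k is positive
  have hcardV : 1 < Fintype.card V := by
    obtain ⟨a1, _, a2, _, ha⟩ := Finset.one_lt_card.mp (lt_of_lt_of_le one_lt_two hA)
    exact Fintype.one_lt_card_iff.mpr ⟨p a1, p a2, fun h => ha (hp.1 h)⟩
  have hk : 0 < k := by
    obtain ⟨c, hc⟩ := Fintype.exists_ne_of_one_lt_card hcardV u
    obtain ⟨W⟩ := hG.preconnected u c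
    have hadj : ∃ b, G.Adj u b := by
      cases W with
      | nil => exact absurd rfl hc
      | cons h _ => exact ⟨_, h⟩
    obtain ⟨b, hb⟩ := hadj
    have hbmem : b ∈ nbhd G w u := by
      refine ⟨hb.ne', ?_⟩
      rw [SimpleGraph.dist_eq_one_iff_adj.mpr hb]
      exact hw
    rw [← hreg u]
    exact (Set.ncard_pos (Set.toFinite _)).mpr ⟨b, hbmem⟩
  -- totals
  have htotp : ∀ z : I, sCount G w tp p z + dCount G w tp p z = k := fun z => by
    rw [aux_total G w tp p hp z, hreg]
  have htotp' : ∀ z : I, sCount G w tp p' z + dCount G w tp p' z = k := fun z => by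
    rw [aux_total G w tp p' hp' z, hreg]
  -- decrease of dCount for x and y
  have hdx : dCount G w tp p' x < dCount G w tp p x := by
    rw [ucost, ucost, if_neg (by rw [htotp' x]; omega), if_neg (by rw [htotp x]; omega)] at hx
    exact aux_improve τ k _ _ _ _ hk (htotp x) (htotp' x) hx
  have hdy : dCount G w tp p' y < dCount G w tp p y := by
    rw [ucost, ucost, if_neg (by rw [htotp' y]; omega), if_neg (by rw [htotp y]; omega)] at hy
    exact aux_improve τ k _ _ _ _ hk (htotp y) (htotp' y) hy
  -- translate to auxF
  have hpx' : p' x = v := by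
    rw [hp'def, hv]
    show p (Equiv.swap x y x) = p y
    rw [Equiv.swap_apply_left]
  have hpy' : p' y = u := by
    rw [hp'def, hu]
    show p (Equiv.swap x y y) = p x
    rw [Equiv.swap_apply_right]
  have hFx' : dCount G w tp p' x = auxF G w t' v := by
    rw [aux_dCount G w tp p' hp' x, ← he', ← hpx']
  have hFy' : dCount G w tp p' y = auxF G w t' u := by
    rw [aux_dCount G w tp p' hp' y, ← he', ← hpy']
  have hFx : dCount G w tp p x = auxF G w t u := by
    rw [aux_dCount G w tp p hp x, ← he, ← hu]
  have hFy : dCount G w tp p y = auxF G w t v := by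
    rw [aux_dCount G w tp p hp y, ← he, ← hv]
  have hsum2 : auxF G w t' u + auxF G w t' v < auxF G w t u + auxF G w t v := by
    rw [← hFx', ← hFy', ← hFx, ← hFy]
    omega
  have hkey := aux_key G w t t' u v huv ht'u ht'v ht'o
  -- ℕ-level sum comparison
  have hsums : ∑ z : I, dCount G w tp p' z < ∑ z : I, dCount G w tp p z := by
    have h1 : ∑ z : I, dCount G w tp p' z = ∑ a : V, auxF G w t' a := by
      rw [show (fun z => dCount G w tp p' z) = fun z => auxF G w t' (p' z) from
        funext fun z => by rw [aux_dCount G w tp p' hp' z, ← he']]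
      exact Fintype.sum_bijective p' hp' _ _ (fun z => rfl)
    have h2 : ∑ z : I, dCount G w tp p z = ∑ a : V, auxF G w t a := by
      rw [show (fun z => dCount G w tp p z) = fun z => auxF G w t (p z) from
        funext fun z => by rw [aux_dCount G w tp p hp z, ← he]]
      exact Fintype.sum_bijective p hp _ _ (fun z => rfl)
    rw [h1, h2]
    omega
  -- conclude
  rw [Phi, Phi]
  apply mul_lt_mul_of_pos_left _ (by norm_num : (0:ℝ) < 1/2)
  rw [← Nat.cast_sum, ← Nat.cast_sum]
  exact_mod_cast hsums
end
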